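/- arXiv:2602.07634 — 6 statements merged into one kernel-verified Lean document; each statement's English description precedes it below -/
import Mathlib

section
/- For a closed convex set P of probability measures on a finite set Θ: there exists a non-trivial experiment π : Θ → Δ(Y) consistent with P (i.e., π(·|θ) is not constant in θ and all p ∈ P induce the same marginal on Y) if and only if the affine dimension of P is strictly less than |Θ| − 1. -/
/-!
An experiment `π` is consistent with `P` exactly when each of its columns `θ ↦ π θ y` is
orthogonal (for the dot product) to the direction space `V = vectorSpan ℝ P`, and the constant
column `1` is always orthogonal to `V` because `P` lies in the simplex. So a non-trivial
consistent experiment exists iff the annihilator of `V`, of dimension `|Θ| - dim V`, contains a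
non-constant vector, i.e. is strictly larger than the line through `1`. Conversely, a
non-constant annihilating vector, rescaled affinely into `[0, 1]`, is the `true` column of a
binary experiment whose `false` column `1 - a` annihilates `V` as well.
-/

open Finset

def simplex (Θ : Type*) [Fintype Θ] : Set (Θ → ℝ) :=
  {p | (∀ θ, 0 ≤ p θ) ∧ ∑ θ, p θ = 1}

open Module Matrix

theorem Submodule.one_lt_finrank_iff_exists_notMem_span_singleton {K E : Type*} [DivisionRing K]
    [AddCommGroup E] [Module K E] {A : Submodule K E} [FiniteDimensional K A] {x : E}
    (hx : x ≠ 0) (hxA : x ∈ A) : 1 < finrank K A ↔ ∃ c ∈ A, c ∉ K ∙ x := by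
  have hle : K ∙ x ≤ A := (Submodule.span_singleton_le_iff_mem x A).2 hxA
  rw [← finrank_span_singleton (K := K) hx, ← not_iff_not]
  push Not
  exact ⟨fun h => (Submodule.eq_of_le_of_finrank_le hle h).ge, Submodule.finrank_mono⟩

theorem mem_span_one_iff_forall_eq {R Θ : Type*} [Semiring R] {c : Θ → R} :
    c ∈ R ∙ (1 : Θ → R) ↔ ∀ θ θ', c θ = c θ' := by
  rw [Submodule.mem_span_singleton]
  refine ⟨fun ⟨a, ha⟩ θ θ' => by simp [← ha], fun h => ?_⟩
  rcases isEmpty_or_nonempty Θ with hΘ | ⟨⟨θ₀⟩⟩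
  · exact ⟨0, Subsingleton.elim _ _⟩
  · exact ⟨c θ₀, funext fun θ => by simp [h θ₀ θ]⟩

section DotAnnihilator

variable {K Θ : Type*} [Field K] [Fintype Θ]

def dotAnnihilator (V : Submodule K (Θ → K)) : Submodule K (Θ → K) :=
  LinearMap.BilinForm.orthogonal (dotProductBilin K K) V

theorem mem_dotAnnihilator {V : Submodule K (Θ → K)} {c : Θ → K} :
    c ∈ dotAnnihilator V ↔ ∀ v ∈ V, c ⬝ᵥ v = 0 := by
  simp [dotAnnihilator, dotProduct_comm]

theorem finrank_dotAnnihilator (V : Submodule K (Θ → K)) :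
    finrank K (dotAnnihilator V) = Fintype.card Θ - finrank K V := by
  rw [dotAnnihilator, LinearMap.BilinForm.finrank_orthogonal, finrank_fintype_fun_eq_card]
  exact ⟨fun c hc => dotProduct_eq_zero_iff.1 hc,
    fun c hc => dotProduct_eq_zero_iff.1 fun v => by simpa [dotProduct_comm] using hc v⟩

theorem mem_dotAnnihilator_vectorSpan_iff {P : Set (Θ → K)} {c : Θ → K} :
    c ∈ dotAnnihilator (vectorSpan K P) ↔ ∀ p ∈ P, ∀ p' ∈ P, c ⬝ᵥ p = c ⬝ᵥ p' := by
  rw [mem_dotAnnihilator]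
  refine ⟨fun h p hp p' hp' => ?_, fun h v hv => ?_⟩
  · rw [← sub_eq_zero, ← dotProduct_sub]
    exact h _ (vsub_mem_vectorSpan K hp hp')
  · rw [vectorSpan_def] at hv
    induction hv using Submodule.span_induction with
    | mem v hv =>
      obtain ⟨p, hp, p', hp', rfl⟩ := hv
      simp only [vsub_eq_sub]
      rw [dotProduct_sub, h p hp p' hp', sub_self]
    | zero => exact dotProduct_zero c
    | add v w _ _ hv hw => rw [dotProduct_add, hv, hw, add_zero]
    | smul a v _ hv => rw [dotProduct_smul, hv, smul_zero]

theorem exists_nonconstant_mem_dotAnnihilator_iff {V : Submodule K (Θ → K)}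
    (hV : (1 : Θ → K) ∈ dotAnnihilator V) :
    (∃ c ∈ dotAnnihilator V, ∃ θ θ', c θ ≠ c θ') ↔ finrank K V + 1 < Fintype.card Θ := by
  rcases isEmpty_or_nonempty Θ with hΘ | hΘ
  · simp
  have hVle : finrank K V ≤ Fintype.card Θ :=
    (Submodule.finrank_le V).trans (finrank_fintype_fun_eq_card K).le
  have key := Submodule.one_lt_finrank_iff_exists_notMem_span_singleton one_ne_zero hV
  simp only [finrank_dotAnnihilator, mem_span_one_iff_forall_eq] at key
  push Not at key
  rw [← key]
  omega

end DotAnnihilator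

section Experiment

variable {K Θ : Type*} [Field K] [LinearOrder K] [IsStrictOrderedRing K] [Fintype Θ]

theorem exists_nonconstant_mem_Icc_of_nonconstant_mem {A : Submodule K (Θ → K)}
    (h1 : (1 : Θ → K) ∈ A) {c : Θ → K} (hc : c ∈ A) {θ₀ θ₁ : Θ} (hne : c θ₀ ≠ c θ₁) :
    ∃ a ∈ A, (∀ θ, a θ ∈ Set.Icc 0 1) ∧ ∃ θ θ', a θ ≠ a θ' := by
  have : Nonempty Θ := ⟨θ₀⟩
  obtain ⟨θm, hm⟩ := Finite.exists_min c
  obtain ⟨θM, hM⟩ := Finite.exists_max c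
  have hd : 0 < c θM - c θm := by
    rcases hne.lt_or_gt with h | h <;> linarith [hm θ₀, hM θ₀, hm θ₁, hM θ₁]
  refine ⟨(c θM - c θm)⁻¹ • (c - c θm • 1), ?_, fun θ => ?_, θm, θM, ?_⟩
  · exact A.smul_mem _ (A.sub_mem hc (A.smul_mem _ h1))
  · simp only [Pi.smul_apply, Pi.sub_apply, Pi.one_apply, smul_eq_mul, mul_one, ← div_eq_inv_mul]
    exact ⟨div_nonneg (sub_nonneg.2 (hm θ)) hd.le, (div_le_one hd).2 (by linarith [hM θ])⟩
  · simp [hd.ne']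

theorem exists_binary_experiment {A : Submodule K (Θ → K)} (h1 : (1 : Θ → K) ∈ A)
    {c : Θ → K} (hc : c ∈ A) {θ₀ θ₁ : Θ} (hne : c θ₀ ≠ c θ₁) :
    ∃ π : Θ → Bool → K, (∀ θ y, 0 ≤ π θ y) ∧ (∀ θ, ∑ y, π θ y = 1) ∧
      (¬ ∀ θ θ', π θ = π θ') ∧ ∀ y, (fun θ => π θ y) ∈ A := by
  obtain ⟨a, ha, ha01, θ, θ', ha_ne⟩ := exists_nonconstant_mem_Icc_of_nonconstant_mem h1 hc hne
  refine ⟨fun θ y => if y then a θ else 1 - a θ, fun θ y => ?_, fun θ => by simp, fun h => ?_,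
    fun y => ?_⟩
  · cases y <;> simp [(ha01 θ).1, (ha01 θ).2]
  · exact ha_ne (by simpa using congrFun (h θ θ') true)
  · cases y
    · exact A.sub_mem h1 ha
    · exact ha

end Experiment

theorem stmt4_general {Θ : Type} [Fintype Θ]
    (P : Set (Θ → ℝ)) (hPsub : P ⊆ simplex Θ) :
    (∃ (Y : Type) (instY : Fintype Y) (π : Θ → Y → ℝ),
      (∀ θ y, 0 ≤ π θ y) ∧
      (∀ θ, ∑ y ∈ @Finset.univ Y instY, π θ y = 1) ∧
      (¬ ∀ θ θ' : Θ, π θ = π θ') ∧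
      (∀ p ∈ P, ∀ p' ∈ P, ∀ y, ∑ θ, π θ y * p θ = ∑ θ, π θ y * p' θ)) ↔
    Module.finrank ℝ (vectorSpan ℝ P) + 1 < Fintype.card Θ := by
  have h1 : (1 : Θ → ℝ) ∈ dotAnnihilator (vectorSpan ℝ P) :=
    mem_dotAnnihilator_vectorSpan_iff.2 fun p hp p' hp' => by
      rw [one_dotProduct, one_dotProduct, (hPsub hp).2, (hPsub hp').2]
  rw [← exists_nonconstant_mem_dotAnnihilator_iff h1]
  constructor
  · rintro ⟨Y, _, π, -, -, hπ, hcons⟩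
    push Not at hπ
    obtain ⟨θ, θ', hne⟩ := hπ
    obtain ⟨y, hy⟩ := Function.ne_iff.mp hne
    exact ⟨fun θ => π θ y, mem_dotAnnihilator_vectorSpan_iff.2 fun p hp p' hp' =>
      hcons p hp p' hp' y, θ, θ', hy⟩
  · rintro ⟨c, hc, θ, θ', hne⟩
    obtain ⟨π, hπ0, hπ1, hπ, hcols⟩ := exists_binary_experiment h1 hc hne
    exact ⟨Bool, inferInstance, π, hπ0, hπ1, hπ, fun p hp p' hp' y =>
      mem_dotAnnihilator_vectorSpan_iff.1 (hcols y) p hp p' hp'⟩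

/-- For a nonempty closed convex set `P` of probability measures on a finite `Θ`, there
exists a non-trivial experiment consistent with `P` iff the affine dimension of `P` is
strictly less than `|Θ| - 1`. -/
theorem stmt4 {Θ : Type} [Fintype Θ]
    (P : Set (Θ → ℝ)) (hPsub : P ⊆ simplex Θ) (hPcl : IsClosed P)
    (hPconv : Convex ℝ P) (hPne : P.Nonempty) :
    (∃ (Y : Type) (instY : Fintype Y) (π : Θ → Y → ℝ),
      (∀ θ y, 0 ≤ π θ y) ∧
      (∀ θ, ∑ y ∈ @Finset.univ Y instY, π θ y = 1) ∧
      (¬ ∀ θ θ' : Θ, π θ = π θ') ∧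
      (∀ p ∈ P, ∀ p' ∈ P, ∀ y, ∑ θ, π θ y * p θ = ∑ θ, π θ y * p' θ)) ↔
    Module.finrank ℝ (vectorSpan ℝ P) + 1 < Fintype.card Θ :=
  stmt4_general P hPsub
end

section
/- Given one binary signal structure witnessing dimension deficiency: if P ⊆ Δ(Θ) is closed convex with dim(P) ≤ |Θ| − 2, then there exists a vector e ∈ ℝ^Θ orthogonal to all differences p − p' (p, p' ∈ P), not a scalar multiple of the constant vector 1, and ε > 0, such that π(y₁|θ) = 1/2 + ε e(θ), π(y₂|θ) = 1/2 − ε e(θ) defines a non-trivial experiment on Y = {y₁, y₂} consistent with P. -/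
open Finset

/-! A subspace `W` of `ℝ^Θ` of dimension at most `|Θ| - 2` leaves room, together with the
constant vector `1`, for a nonzero vector `e` orthogonal to both; such an `e` has mean zero, hence
is not constant. Scaling `e` by `ε` small enough makes `1/2 ± ε e` a pair of likelihoods, and
since every `p ∈ P` has total mass one, the signal probabilities
`∑ θ, (1/2 ± ε e θ) p θ` only see `P` through `∑ θ, e θ p θ`, which is constant on `P` because
`e ⊥ vectorSpan P`. -/

section Orthogonal

variable {K ι : Type*} [Field K] [Fintype ι]

theorem exists_ne_zero_forall_dotProduct_eq_zero [DecidableEq ι] (W : Submodule K (ι → K))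
    (hW : Module.finrank K W < Fintype.card ι) :
    ∃ e : ι → K, e ≠ 0 ∧ ∀ v ∈ W, e ⬝ᵥ v = 0 := by
  have hW_lt_top : W < ⊤ := by
    refine lt_top_iff_ne_top.mpr fun h => ?_
    rw [h, finrank_top, Module.finrank_fintype_fun_eq_card] at hW
    exact hW.false
  obtain ⟨f, hf, hWf⟩ := W.exists_le_ker_of_lt_top hW_lt_top
  refine ⟨(dotProductEquiv K ι).symm f, by simpa using hf, fun v hv => ?_⟩
  change dotProductEquiv K ι ((dotProductEquiv K ι).symm f) v = 0
  simpa using hWf hv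

theorem not_exists_const_of_dotProduct_one_eq_zero [CharZero K] [Nonempty ι] {e : ι → K}
    (he : e ≠ 0) (he_one : e ⬝ᵥ (fun _ => 1) = 0) : ¬ ∃ c : K, ∀ i, e i = c := by
  rintro ⟨c, hc⟩
  have hce : e = fun _ => c := funext hc
  subst hce
  have hc0 : c = 0 := by simpa [dotProduct, Fintype.card_ne_zero] using he_one
  exact he (funext fun _ => hc0)

theorem exists_forall_dotProduct_eq_zero_not_const [CharZero K] [DecidableEq ι]
    (W : Submodule K (ι → K)) (hW : Module.finrank K W + 2 ≤ Fintype.card ι) :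
    ∃ e : ι → K, (∀ v ∈ W, e ⬝ᵥ v = 0) ∧ ¬ ∃ c : K, ∀ i, e i = c := by
  have : Nonempty ι := Fintype.card_pos_iff.mp (by omega)
  have hone : (fun _ => 1 : ι → K) ≠ 0 := fun h =>
    one_ne_zero (congrFun h (Classical.arbitrary ι))
  have hrank : Module.finrank K ↥(W ⊔ K ∙ (fun _ => 1 : ι → K)) < Fintype.card ι := by
    have := Submodule.finrank_add_le_finrank_add_finrank W (K ∙ (fun _ => 1 : ι → K))
    rw [finrank_span_singleton hone] at this
    omega
  obtain ⟨e, he, horth⟩ := exists_ne_zero_forall_dotProduct_eq_zero _ hrank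
  refine ⟨e, fun v hv => horth v (Submodule.mem_sup_left hv), ?_⟩
  exact not_exists_const_of_dotProduct_one_eq_zero he
    (horth _ (Submodule.mem_sup_right (Submodule.mem_span_singleton_self _)))

end Orthogonal

theorem exists_pos_forall_abs_mul_le {ι : Type*} [Fintype ι] (e : ι → ℝ) {r : ℝ}
    (hr : 0 < r) :
    ∃ ε : ℝ, 0 < ε ∧ ∀ i, |ε * e i| ≤ r := by
  set B := ∑ i, |e i|
  have hB : 0 ≤ B := sum_nonneg fun i _ => abs_nonneg (e i)
  refine ⟨r / (B + 1), by positivity, fun i => ?_⟩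
  have hei : |e i| ≤ B := single_le_sum (f := fun i => |e i|) (fun i _ => abs_nonneg (e i))
    (mem_univ i)
  rw [abs_mul, abs_of_pos (by positivity), div_mul_eq_mul_div, div_le_iff₀ (by positivity)]
  nlinarith

theorem sum_add_mul_mul_eq_of_mem_simplex {Θ : Type*} [Fintype Θ] {p p' : Θ → ℝ}
    (hp : p ∈ simplex Θ) (hp' : p' ∈ simplex Θ) {e : Θ → ℝ}
    (he : ∑ θ, e θ * (p θ - p' θ) = 0) (a b : ℝ) :
    ∑ θ, (a + b * e θ) * p θ = ∑ θ, (a + b * e θ) * p' θ := by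
  have hmass : ∑ θ, (p θ - p' θ) = 0 := by rw [sum_sub_distrib, hp.2, hp'.2, sub_self]
  rw [← sub_eq_zero, ← sum_sub_distrib]
  calc ∑ θ, ((a + b * e θ) * p θ - (a + b * e θ) * p' θ)
      = a * ∑ θ, (p θ - p' θ) + b * ∑ θ, e θ * (p θ - p' θ) := by
        simp only [mul_sum, ← sum_add_distrib]
        exact sum_congr rfl fun θ _ => by ring
    _ = 0 := by rw [hmass, he]; ring

theorem stmt5_general {Θ : Type} [Fintype Θ]
    (P : Set (Θ → ℝ)) (hPsub : P ⊆ simplex Θ)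
    (hdim : Module.finrank ℝ (vectorSpan ℝ P) + 2 ≤ Fintype.card Θ) :
    ∃ (e : Θ → ℝ) (ε : ℝ), 0 < ε ∧
      (∀ p ∈ P, ∀ p' ∈ P, ∑ θ, e θ * (p θ - p' θ) = 0) ∧
      (¬ ∃ c : ℝ, ∀ θ, e θ = c) ∧
      (∀ θ, 0 ≤ 1/2 + ε * e θ ∧ 1/2 + ε * e θ ≤ 1) ∧
      (¬ ∀ θ θ' : Θ, 1/2 + ε * e θ = 1/2 + ε * e θ') ∧
      (∀ p ∈ P, ∀ p' ∈ P,
        (∑ θ, (1/2 + ε * e θ) * p θ = ∑ θ, (1/2 + ε * e θ) * p' θ) ∧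
        (∑ θ, (1/2 - ε * e θ) * p θ = ∑ θ, (1/2 - ε * e θ) * p' θ)) := by
  classical
  obtain ⟨e, horth, hnc⟩ := exists_forall_dotProduct_eq_zero_not_const _ hdim
  obtain ⟨ε, hε, hsmall⟩ := exists_pos_forall_abs_mul_le e one_half_pos
  have hdiff : ∀ p ∈ P, ∀ p' ∈ P, ∑ θ, e θ * (p θ - p' θ) = 0 := fun p hp p' hp' =>
    horth _ (vsub_mem_vectorSpan ℝ hp hp')
  refine ⟨e, ε, hε, hdiff, hnc, fun θ => ?_, fun h => ?_, fun p hp p' hp' => ⟨?_, ?_⟩⟩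
  · have := abs_le.mp (hsmall θ)
    constructor <;> linarith
  · obtain ⟨θ₀⟩ : Nonempty Θ := Fintype.card_pos_iff.mp (by omega)
    exact hnc ⟨e θ₀, fun θ => mul_left_cancel₀ hε.ne' (add_left_cancel (h θ θ₀))⟩
  · exact sum_add_mul_mul_eq_of_mem_simplex (hPsub hp) (hPsub hp') (hdiff p hp p' hp') _ _
  · simpa only [sub_eq_add_neg, ← neg_mul] using
      sum_add_mul_mul_eq_of_mem_simplex (hPsub hp) (hPsub hp') (hdiff p hp p' hp') (1/2) (-ε)

/-- If `P ⊆ Δ(Θ)` is closed convex with `dim P ≤ |Θ| - 2`, then there exist a vector `e`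
orthogonal to all differences of elements of `P`, not a multiple of the constant vector,
and `ε > 0`, such that `π(y₁|θ) = 1/2 + ε e(θ)`, `π(y₂|θ) = 1/2 - ε e(θ)` is a non-trivial
binary experiment consistent with `P`. -/
theorem stmt5 {Θ : Type} [Fintype Θ]
    (P : Set (Θ → ℝ)) (hPsub : P ⊆ simplex Θ) (hPcl : IsClosed P)
    (hPconv : Convex ℝ P) (hPne : P.Nonempty)
    (hdim : Module.finrank ℝ (vectorSpan ℝ P) + 2 ≤ Fintype.card Θ) :
    ∃ (e : Θ → ℝ) (ε : ℝ), 0 < ε ∧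
      (∀ p ∈ P, ∀ p' ∈ P, ∑ θ, e θ * (p θ - p' θ) = 0) ∧
      (¬ ∃ c : ℝ, ∀ θ, e θ = c) ∧
      (∀ θ, 0 ≤ 1/2 + ε * e θ ∧ 1/2 + ε * e θ ≤ 1) ∧
      (¬ ∀ θ θ' : Θ, 1/2 + ε * e θ = 1/2 + ε * e θ') ∧
      (∀ p ∈ P, ∀ p' ∈ P,
        (∑ θ, (1/2 + ε * e θ) * p θ = ∑ θ, (1/2 + ε * e θ) * p' θ) ∧
        (∑ θ, (1/2 - ε * e θ) * p θ = ∑ θ, (1/2 - ε * e θ) * p' θ)) :=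
  stmt5_general P hPsub hdim
end

section
/- Closure under Bayesian updating of partially identified sets: suppose P₀ = Σ_φ τ₀(φ) P_φ is partially identified by (τ₀, Φ) and π : Θ → Δ(Y) is Φ-measurable. Let μ(y) = Σ_φ π(y|φ) τ₀(φ) and assume μ(y) > 0. Then the set of prior-by-prior Bayesian posteriors P_y = { p_y : p_y(θ) = π(y|θ) p₀(θ)/μ(y), p₀ ∈ P₀ } equals Σ_φ τ_y(φ) P_φ, where τ_y(φ) = π(y|φ) τ₀(φ)/μ(y) is the Bayesian update of τ₀. -/
/-! Bayes' rule multiplies a prior pointwise by the likelihood `θ ↦ π θ y` and divides by the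
marginal. Each component of a mixture `∑ φ, τ φ • q_φ` is supported on its cell `φ`, where a
`Φ`-measurable likelihood is the constant `π(y|φ)`; so reweighting the prior only rescales the
mixture weights, `τ₀ φ ↦ π(y|φ) τ₀ φ / μ y`, and leaves the components `q_φ` untouched. -/

open Finset

/-- The Minkowski combination `∑ i, τ i • P i`. -/
def mix {Θ Φ : Type*} [Fintype Θ] [Fintype Φ] (τ : Φ → ℝ) (P : Φ → Set (Θ → ℝ)) :
    Set (Θ → ℝ) :=
  {p | ∃ q : Φ → Θ → ℝ, (∀ i, q i ∈ P i) ∧ p = fun θ => ∑ i, τ i * q i θ}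

section Reweight

variable {Θ Φ : Type*}

lemma mul_eq_mul_of_fiberwise_const {cell : Θ → Φ} {f q : Θ → ℝ} {i : Φ} {θ₀ : Θ}
    (hf : ∀ θ θ', cell θ = cell θ' → f θ = f θ') (hq : ∀ θ, cell θ ≠ i → q θ = 0)
    (hθ₀ : cell θ₀ = i) (θ : Θ) : f θ * q θ = f θ₀ * q θ := by
  by_cases h : cell θ = i
  · rw [hf θ θ₀ (h.trans hθ₀.symm)]
  · rw [hq θ h, mul_zero, mul_zero]

variable [Fintype Φ] {τ v : Φ → ℝ} {P : Φ → Set (Θ → ℝ)} {w : Θ → ℝ}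

lemma mul_sum_mix_apply (hw : ∀ i, ∀ q ∈ P i, ∀ θ, w θ * q θ = v i * q θ)
    {q : Φ → Θ → ℝ} (hq : ∀ i, q i ∈ P i) (θ : Θ) :
    w θ * ∑ i, τ i * q i θ = ∑ i, v i * τ i * q i θ := by
  rw [mul_sum]
  refine sum_congr rfl fun i _ => ?_
  rw [mul_left_comm, hw i (q i) (hq i) θ]
  ring

lemma setOf_mul_mix_eq [Fintype Θ] (hw : ∀ i, ∀ q ∈ P i, ∀ θ, w θ * q θ = v i * q θ) :
    {p | ∃ p₀ ∈ mix τ P, p = fun θ => w θ * p₀ θ} = mix (fun i => v i * τ i) P := by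
  ext p
  constructor
  · rintro ⟨_, ⟨q, hq, rfl⟩, rfl⟩
    exact ⟨q, hq, funext (mul_sum_mix_apply hw hq)⟩
  · rintro ⟨q, hq, rfl⟩
    exact ⟨_, ⟨q, hq, rfl⟩, funext fun θ => (mul_sum_mix_apply hw hq θ).symm⟩

end Reweight

theorem stmt6_general {Θ Φ Y : Type*} [Fintype Θ] [Fintype Φ]
    (cell : Θ → Φ)
    (rep : Φ → Θ) (hrep : ∀ i, cell (rep i) = i)
    (τ₀ : Φ → ℝ)
    (Pφ : Φ → Set (Θ → ℝ))
    (hPφ : ∀ i, ∀ q ∈ Pφ i, q ∈ simplex Θ ∧ ∀ θ, cell θ ≠ i → q θ = 0)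
    (P₀ : Set (Θ → ℝ)) (hdecomp : P₀ = mix τ₀ Pφ)
    (π : Θ → Y → ℝ)
    (hmeas : ∀ θ θ', cell θ = cell θ' → π θ = π θ')
    (μ : Y → ℝ)
    (y : Y) :
    {py : Θ → ℝ | ∃ p₀ ∈ P₀, py = fun θ => π θ y * p₀ θ / μ y} =
      mix (fun i => π (rep i) y * τ₀ i / μ y) Pφ := by
  have hposterior : ∀ i, ∀ q ∈ Pφ i, ∀ θ, π θ y / μ y * q θ = π (rep i) y / μ y * q θ :=
    fun i q hq => mul_eq_mul_of_fiberwise_const (fun θ θ' h => by rw [hmeas θ θ' h])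
      (hPφ i q hq).2 (hrep i)
  subst hdecomp
  simp_rw [mul_div_right_comm]
  exact setOf_mul_mix_eq hposterior

/-- Closure of partially identified sets under Bayesian updating: the prior-by-prior
posterior set of `P₀ = ∑ φ, τ₀ φ • P_φ` under a `Φ`-measurable experiment `π` given `y`
(with marginal `μ y > 0`) equals `∑ φ, τ_y φ • P_φ`, where `τ_y` is the Bayesian update
of the reduced-form prior `τ₀`. -/
theorem stmt6 {Θ Φ Y : Type*} [Fintype Θ] [Fintype Φ] [Fintype Y]
    (cell : Θ → Φ) (hcell : Function.Surjective cell)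
    (rep : Φ → Θ) (hrep : ∀ i, cell (rep i) = i)
    (τ₀ : Φ → ℝ) (hτ0 : ∀ i, 0 < τ₀ i) (hτ1 : ∑ i, τ₀ i = 1)
    (Pφ : Φ → Set (Θ → ℝ))
    (hPφ : ∀ i, ∀ q ∈ Pφ i, q ∈ simplex Θ ∧ ∀ θ, cell θ ≠ i → q θ = 0)
    (P₀ : Set (Θ → ℝ)) (hdecomp : P₀ = mix τ₀ Pφ)
    (π : Θ → Y → ℝ) (hπ0 : ∀ θ y, 0 ≤ π θ y) (hπ1 : ∀ θ, ∑ y, π θ y = 1)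
    (hmeas : ∀ θ θ', cell θ = cell θ' → π θ = π θ')
    (μ : Y → ℝ) (hμ : ∀ y, μ y = ∑ i, π (rep i) y * τ₀ i)
    (y : Y) (hμy : 0 < μ y) :
    {py : Θ → ℝ | ∃ p₀ ∈ P₀, py = fun θ => π θ y * p₀ θ / μ y} =
      mix (fun i => π (rep i) y * τ₀ i / μ y) Pφ :=
  stmt6_general cell rep hrep τ₀ Pφ hPφ P₀ hdecomp π hmeas μ y
end

section
/- Aumann plausibility of consistent experiments under partial identification: if P₀ = Σ_φ τ₀(φ) P_φ with each P_φ ⊆ Δ(φ) convex, and π : Θ → Δ(Y) is Φ-measurable with induced marginal μ(y) = Σ_φ π(y|φ) τ₀(φ) having full support on Y, then the prior-by-prior posterior sets satisfy Σ_{y∈Y} μ(y) P_y = P₀ (equality of Minkowski sums). -/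
/-!
Bayes' rule gives `μ y • P_y = {θ ↦ π θ y * p₀ θ | p₀ ∈ P₀}`, so `∑ y, μ y • P_y ⊇ P₀` because the
likelihoods `π θ ·` sum to one. Conversely, a point of `∑ y, μ y • P_y` is `θ ↦ ∑ y, π θ y * p_y θ`
with every `p_y ∈ P₀`. Since `π` is constant on each cell `φ` and the `φ`-component of every `p_y`
lives on `φ`, this regroups as `∑ φ, τ₀ φ • (∑ y, π(y|φ) • q_{y,φ})`, and each inner sum is a convex
combination of points of `P_φ`.
-/

open Finset

theorem Convex.fun_sum_mul_mem {Θ Y : Type*} [Fintype Y] {s : Set (Θ → ℝ)} (hs : Convex ℝ s)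
    {w : Y → ℝ} (hw₀ : ∀ y, 0 ≤ w y) (hw₁ : ∑ y, w y = 1) {f : Y → Θ → ℝ} (hf : ∀ y, f y ∈ s) :
    (fun θ => ∑ y, w y * f y θ) ∈ s := by
  have hmem : ∑ y, w y • f y ∈ s :=
    hs.sum_mem (fun y _ => hw₀ y) hw₁ (fun y _ => hf y)
  convert hmem using 1
  funext θ
  simp only [Finset.sum_apply, Pi.smul_apply, smul_eq_mul]

theorem fun_sum_mul_mem_mix {Θ Φ Y : Type*} [Fintype Θ] [Fintype Φ] [Fintype Y]
    {cell : Θ → Φ} {rep : Φ → Θ} (hrep : ∀ i, cell (rep i) = i)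
    {τ : Φ → ℝ} {P : Φ → Set (Θ → ℝ)} (hconv : ∀ i, Convex ℝ (P i))
    (hsupp : ∀ i, ∀ q ∈ P i, ∀ θ, cell θ ≠ i → q θ = 0)
    {w : Θ → Y → ℝ} (hw₀ : ∀ θ y, 0 ≤ w θ y) (hw₁ : ∀ θ, ∑ y, w θ y = 1)
    (hw : ∀ θ θ', cell θ = cell θ' → w θ = w θ')
    {p : Y → Θ → ℝ} (hp : ∀ y, p y ∈ mix τ P) :
    (fun θ => ∑ y, w θ y * p y θ) ∈ mix τ P := by
  choose s hs hps using hp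
  refine ⟨fun i θ => ∑ y, w (rep i) y * s y i θ,
    fun i => (hconv i).fun_sum_mul_mem (hw₀ (rep i)) (hw₁ (rep i)) (fun y => hs y i), ?_⟩
  have hcell : ∀ i y θ, w θ y * s y i θ = w (rep i) y * s y i θ := by
    intro i y θ
    by_cases h : cell θ = i
    · rw [hw θ (rep i) (by rw [h, hrep])]
    · rw [hsupp i (s y i) (hs y i) θ h, mul_zero, mul_zero]
  funext θ
  calc ∑ y, w θ y * p y θ = ∑ y, ∑ i, τ i * (w θ y * s y i θ) := by
        refine sum_congr rfl fun y _ => ?_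
        rw [hps y, mul_sum]
        exact sum_congr rfl fun i _ => by ring
    _ = ∑ i, τ i * ∑ y, w (rep i) y * s y i θ := by
        rw [sum_comm]
        simp only [hcell, mul_sum]

theorem stmt7_general {Θ Φ Y : Type*} [Fintype Θ] [Fintype Φ] [Fintype Y]
    (cell : Θ → Φ)
    (rep : Φ → Θ) (hrep : ∀ i, cell (rep i) = i)
    (τ₀ : Φ → ℝ)
    (Pφ : Φ → Set (Θ → ℝ)) (hPφconv : ∀ i, Convex ℝ (Pφ i))
    (hPφ : ∀ i, ∀ q ∈ Pφ i, q ∈ simplex Θ ∧ ∀ θ, cell θ ≠ i → q θ = 0)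
    (P₀ : Set (Θ → ℝ)) (hdecomp : P₀ = mix τ₀ Pφ)
    (π : Θ → Y → ℝ) (hπ0 : ∀ θ y, 0 ≤ π θ y) (hπ1 : ∀ θ, ∑ y, π θ y = 1)
    (hmeas : ∀ θ θ', cell θ = cell θ' → π θ = π θ')
    (μ : Y → ℝ) (hμpos : ∀ y, 0 < μ y)
    (Py : Y → Set (Θ → ℝ))
    (hPy : ∀ y, Py y = {py : Θ → ℝ | ∃ p₀ ∈ P₀, py = fun θ => π θ y * p₀ θ / μ y}) :
    mix μ Py = P₀ := by
  have hμ_mul : ∀ y θ (p₀ : Θ → ℝ), μ y * (π θ y * p₀ θ / μ y) = π θ y * p₀ θ :=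
    fun y _ _ => mul_div_cancel₀ _ (hμpos y).ne'
  apply Set.Subset.antisymm
  · rintro _ ⟨q, hq, rfl⟩
    simp only [hPy, Set.mem_ofPred_eq] at hq
    choose p₀ hp₀ hq using hq
    simp only [hq, hμ_mul]
    subst hdecomp
    exact fun_sum_mul_mem_mix hrep hPφconv (fun i q hq => (hPφ i q hq).2) hπ0 hπ1 hmeas hp₀
  · intro p₀ hp₀
    refine ⟨fun y θ => π θ y * p₀ θ / μ y, fun y => hPy y ▸ ⟨p₀, hp₀, rfl⟩, ?_⟩
    funext θ
    simp only [hμ_mul, ← sum_mul, hπ1, one_mul]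

/-- Aumann plausibility of consistent experiments under partial identification: if
`P₀ = ∑ φ, τ₀ φ • P_φ` with each `P_φ ⊆ Δ(φ)` convex, and `π` is `Φ`-measurable with
full-support marginal `μ`, then the Minkowski combination of the prior-by-prior
posterior sets recovers `P₀`: `∑ y, μ y • P_y = P₀`. -/
theorem stmt7 {Θ Φ Y : Type*} [Fintype Θ] [Fintype Φ] [Fintype Y]
    (cell : Θ → Φ) (hcell : Function.Surjective cell)
    (rep : Φ → Θ) (hrep : ∀ i, cell (rep i) = i)
    (τ₀ : Φ → ℝ) (hτ0 : ∀ i, 0 < τ₀ i) (hτ1 : ∑ i, τ₀ i = 1)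
    (Pφ : Φ → Set (Θ → ℝ)) (hPφconv : ∀ i, Convex ℝ (Pφ i))
    (hPφ : ∀ i, ∀ q ∈ Pφ i, q ∈ simplex Θ ∧ ∀ θ, cell θ ≠ i → q θ = 0)
    (P₀ : Set (Θ → ℝ)) (hdecomp : P₀ = mix τ₀ Pφ)
    (π : Θ → Y → ℝ) (hπ0 : ∀ θ y, 0 ≤ π θ y) (hπ1 : ∀ θ, ∑ y, π θ y = 1)
    (hmeas : ∀ θ θ', cell θ = cell θ' → π θ = π θ')
    (μ : Y → ℝ) (hμ : ∀ y, μ y = ∑ i, π (rep i) y * τ₀ i) (hμpos : ∀ y, 0 < μ y)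
    (Py : Y → Set (Θ → ℝ))
    (hPy : ∀ y, Py y = {py : Θ → ℝ | ∃ p₀ ∈ P₀, py = fun θ => π θ y * p₀ θ / μ y}) :
    mix μ Py = P₀ :=
  stmt7_general cell rep hrep τ₀ Pφ hPφconv hPφ P₀ hdecomp π hπ0 hπ1 hmeas μ hμpos Py hPy
end

section
/- The set of functionals constant on a prior set closed under consistent-experiment multiplication: let P ⊆ Δ(Θ) be closed convex such that every experiment consistent with P induces an Aumann-plausible information structure. Let V = {v ∈ ℝ^Θ : ⟨v, p − p'⟩ = 0 for all p, p' ∈ P}. Then V is closed under pointwise multiplication: if v, v' ∈ V then the pointwise product vv' ∈ V. -/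
/-!
Scale `v` to a small `w = ε v` and run the binary experiment that sends signal `true` with
probability `(1 + w θ) / 2`. Since `w` is constant on `P`, this experiment is consistent
with `P`, and the posterior of `p` after `true` mixed with the posterior of `p'` after `false`
is a prior `r` with `r - p' = (1 + w) (p - p') / 2`. Plausibility puts `r` in `P`, so
`⟨v', r - p'⟩ = 0`, and since `⟨v', p - p'⟩ = 0` this leaves `⟨w v', p - p'⟩ = 0`.
-/

open Finset

variable {Θ : Type*}

noncomputable def binarySignal (t : ℝ) : Bool → ℝ
  | true => (1 + t) / 2
  | false => (1 - t) / 2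

theorem binarySignal_pos {t : ℝ} (ht : |t| < 1) (y : Bool) : 0 < binarySignal t y := by
  cases y <;> simp only [binarySignal] <;> linarith [abs_lt.mp ht]

theorem sum_binarySignal (t : ℝ) : ∑ y, binarySignal t y = 1 := by
  simp only [Fintype.sum_bool, binarySignal]
  ring

/-- Averages, with the signal marginal, the posterior of `p` after `true` and that of `p'` after
`false`. -/
noncomputable def binaryMixture (w p p' : Θ → ℝ) (θ : Θ) : ℝ :=
  binarySignal (w θ) true * p θ + binarySignal (w θ) false * p' θ

theorem binaryMixture_sub (w p p' : Θ → ℝ) (θ : Θ) :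
    binaryMixture w p p' θ - p' θ = (1 + w θ) / 2 * (p θ - p' θ) := by
  simp only [binaryMixture, binarySignal]
  ring

variable [Fintype Θ]

/-- `v ∈ V` in the paper's notation. -/
def IsConstOn (P : Set (Θ → ℝ)) (v : Θ → ℝ) : Prop :=
  ∀ p ∈ P, ∀ p' ∈ P, ∑ θ, v θ * (p θ - p' θ) = 0

namespace IsConstOn

variable {P : Set (Θ → ℝ)} {v : Θ → ℝ}

theorem sum_mul_eq (hv : IsConstOn P v) {p p' : Θ → ℝ} (hp : p ∈ P) (hp' : p' ∈ P) :
    ∑ θ, v θ * p θ = ∑ θ, v θ * p' θ := by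
  rw [← sub_eq_zero, ← sum_sub_distrib, ← hv p hp p' hp']
  simp only [mul_sub]

theorem const_mul (hv : IsConstOn P v) (c : ℝ) : IsConstOn P (fun θ => c * v θ) := by
  intro p hp p' hp'
  simp only [mul_assoc, ← mul_sum, hv p hp p' hp', mul_zero]

end IsConstOn

theorem exists_pos_forall_abs_mul_le_s14 (v : Θ → ℝ) {c : ℝ} (hc : 0 < c) :
    ∃ ε > 0, ∀ θ, |ε * v θ| ≤ c := by
  set M := ∑ θ, |v θ|
  have hM : 0 ≤ M := sum_nonneg fun θ _ => abs_nonneg (v θ)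
  refine ⟨c / (M + 1), by positivity, fun θ => ?_⟩
  have hvM : |v θ| ≤ M + 1 := by
    linarith [single_le_sum (fun θ _ => abs_nonneg (v θ)) (mem_univ θ) (f := fun θ => |v θ|)]
  rw [abs_mul, abs_of_pos (by positivity), div_mul_eq_mul_div, div_le_iff₀ (by positivity)]
  exact mul_le_mul_of_nonneg_left hvM hc.le

theorem abs_sum_mul_le_of_mem_simplex {w r : Θ → ℝ} {c : ℝ} (hw : ∀ θ, |w θ| ≤ c)
    (hr : r ∈ simplex Θ) : |∑ θ, w θ * r θ| ≤ c := by
  calc |∑ θ, w θ * r θ| ≤ ∑ θ, |w θ| * r θ := by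
        refine (abs_sum_le_sum_abs _ _).trans_eq (sum_congr rfl fun θ _ => ?_)
        rw [abs_mul, abs_of_nonneg (hr.1 θ)]
    _ ≤ ∑ θ, c * r θ := sum_le_sum fun θ _ => mul_le_mul_of_nonneg_right (hw θ) (hr.1 θ)
    _ = c := by rw [← mul_sum, hr.2, mul_one]

theorem sum_binarySignal_mul {w r : Θ → ℝ} (hr : ∑ θ, r θ = 1) (y : Bool) :
    ∑ θ, binarySignal (w θ) y * r θ = binarySignal (∑ θ, w θ * r θ) y := by
  cases y <;> simp only [binarySignal, div_mul_eq_mul_div, ← sum_div, add_mul, sub_mul, one_mul,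
    sum_add_distrib, sum_sub_distrib, hr]

/-- Aumann plausibility of every experiment `π` consistent with `P`: averaging the
prior-by-prior posteriors `π(y|·) p₀ / μ y` with the signal marginal `μ` recovers `P`. -/
def IsAumannPlausible (P : Set (Θ → ℝ)) : Prop :=
  ∀ (Y : Type) (instY : Fintype Y) (π : Θ → Y → ℝ) (μ : Y → ℝ),
    (∀ θ y, 0 ≤ π θ y) →
    (∀ θ, ∑ y ∈ @Finset.univ Y instY, π θ y = 1) →
    (∀ p ∈ P, ∀ y, ∑ θ, π θ y * p θ = μ y) →
    (∀ y, 0 < μ y) →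
    {p : Θ → ℝ | ∃ q : Y → Θ → ℝ,
      (∀ y, ∃ p₀ ∈ P, q y = fun θ => π θ y * p₀ θ / μ y) ∧
      p = fun θ => ∑ y ∈ @Finset.univ Y instY, μ y * q y θ} = P

theorem IsAumannPlausible.binaryMixture_mem {P : Set (Θ → ℝ)} (hP : IsAumannPlausible P)
    (hPsub : P ⊆ simplex Θ) {w : Θ → ℝ} (hw : IsConstOn P w) (hw_le : ∀ θ, |w θ| ≤ 1 / 2)
    {p p' : Θ → ℝ} (hp : p ∈ P) (hp' : p' ∈ P) : binaryMixture w p p' ∈ P := by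
  set μ := binarySignal (∑ θ, w θ * p θ)
  have hμ : ∀ y, 0 < μ y :=
    binarySignal_pos ((abs_sum_mul_le_of_mem_simplex hw_le (hPsub hp)).trans_lt (by norm_num))
  have hconsistent : ∀ r ∈ P, ∀ y, ∑ θ, binarySignal (w θ) y * r θ = μ y := fun r hr y => by
    rw [sum_binarySignal_mul (hPsub hr).2, hw.sum_mul_eq hr hp]
  have hπ_nonneg : ∀ θ y, 0 ≤ binarySignal (w θ) y := fun θ y =>
    (binarySignal_pos ((hw_le θ).trans_lt (by norm_num)) y).le
  rw [← hP Bool _ (fun θ => binarySignal (w θ)) μ hπ_nonneg (fun θ => sum_binarySignal _)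
    hconsistent hμ]
  refine ⟨fun y θ => binarySignal (w θ) y * (if y then p θ else p' θ) / μ y,
    fun y => ?_, funext fun θ => ?_⟩
  · cases y
    · exact ⟨p', hp', rfl⟩
    · exact ⟨p, hp, rfl⟩
  · simp only [binaryMixture, Fintype.sum_bool, if_true, Bool.false_eq_true, if_false,
      mul_div_cancel₀ _ (hμ _).ne']

theorem stmt14_general {Θ : Type} [Fintype Θ]
    (P : Set (Θ → ℝ)) (hPsub : P ⊆ simplex Θ)
    (H : ∀ (Y : Type) (instY : Fintype Y) (π : Θ → Y → ℝ) (μ : Y → ℝ),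
      (∀ θ y, 0 ≤ π θ y) →
      (∀ θ, ∑ y ∈ @Finset.univ Y instY, π θ y = 1) →
      (∀ p ∈ P, ∀ y, ∑ θ, π θ y * p θ = μ y) →
      (∀ y, 0 < μ y) →
      {p : Θ → ℝ | ∃ q : Y → Θ → ℝ,
        (∀ y, ∃ p₀ ∈ P, q y = fun θ => π θ y * p₀ θ / μ y) ∧
        p = fun θ => ∑ y ∈ @Finset.univ Y instY, μ y * q y θ} = P) :
    ∀ v v' : Θ → ℝ,
      (∀ p ∈ P, ∀ p' ∈ P, ∑ θ, v θ * (p θ - p' θ) = 0) →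
      (∀ p ∈ P, ∀ p' ∈ P, ∑ θ, v' θ * (p θ - p' θ) = 0) →
      (∀ p ∈ P, ∀ p' ∈ P, ∑ θ, (v θ * v' θ) * (p θ - p' θ) = 0) := by
  intro v v' hv hv' p hp p' hp'
  obtain ⟨ε, hε, hεv⟩ := exists_pos_forall_abs_mul_le_s14 v (c := 1 / 2) (by norm_num)
  have hmix := IsAumannPlausible.binaryMixture_mem H hPsub (IsConstOn.const_mul hv ε) hεv hp hp'
  have key : ∑ θ, v' θ * (p θ - p' θ) + ε * ∑ θ, v θ * v' θ * (p θ - p' θ) = 0 := by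
    have h := hv' _ hmix p' hp'
    simp only [binaryMixture_sub] at h
    rw [mul_sum, ← sum_add_distrib, ← mul_eq_zero_of_right 2 h, mul_sum]
    exact sum_congr rfl fun θ _ => by ring
  rwa [hv' p hp p' hp', zero_add, mul_eq_zero, or_iff_right hε.ne'] at key

/-- If every experiment consistent with the closed convex prior set `P` induces an
Aumann-plausible information structure (the Minkowski combination, with the marginal
weights, of the prior-by-prior posterior sets recovers `P`), then the space
`V = {v : ⟨v, p - p'⟩ = 0 ∀ p, p' ∈ P}` of linear functionals constant on `P` is closed
under pointwise multiplication. -/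
theorem stmt14 {Θ : Type} [Fintype Θ]
    (P : Set (Θ → ℝ)) (hPsub : P ⊆ simplex Θ) (hPcl : IsClosed P)
    (hPconv : Convex ℝ P) (hPne : P.Nonempty)
    (H : ∀ (Y : Type) (instY : Fintype Y) (π : Θ → Y → ℝ) (μ : Y → ℝ),
      (∀ θ y, 0 ≤ π θ y) →
      (∀ θ, ∑ y ∈ @Finset.univ Y instY, π θ y = 1) →
      (∀ p ∈ P, ∀ y, ∑ θ, π θ y * p θ = μ y) →
      (∀ y, 0 < μ y) →
      {p : Θ → ℝ | ∃ q : Y → Θ → ℝ,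
        (∀ y, ∃ p₀ ∈ P, q y = fun θ => π θ y * p₀ θ / μ y) ∧
        p = fun θ => ∑ y ∈ @Finset.univ Y instY, μ y * q y θ} = P) :
    ∀ v v' : Θ → ℝ,
      (∀ p ∈ P, ∀ p' ∈ P, ∑ θ, v θ * (p θ - p' θ) = 0) →
      (∀ p ∈ P, ∀ p' ∈ P, ∑ θ, v' θ * (p θ - p' θ) = 0) →
      (∀ p ∈ P, ∀ p' ∈ P, ∑ θ, (v θ * v' θ) * (p θ - p' θ) = 0) :=
  stmt14_general P hPsub H
end

section
/- Reduced-form weights of posterior sets in an Aumann-plausible structure are deterministic: suppose P₀ = Σ_φ τ(φ) P_φ is partially identified by (τ, Φ), and μ ∈ Δ(Y) with support on compact convex sets {P_y}_{y∈Y} satisfies Σ_y μ(y) P_y = P₀. Then for every y ∈ Y with μ(y) > 0 and every φ ∈ Φ, the linear functional f_φ(p) = Σ_{θ∈φ} p(θ) is constant on P_y; moreover, denoting this constant τ_y(φ), one has Σ_y μ(y) τ_y(φ) = τ(φ). -/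
open Finset

/-!
Every prior in `P₀ = ∑ τ φ • P_φ` puts mass exactly `τ φ` on the cell `φ`, so the linear
functional `f_φ` is constant on `P₀ = ∑ μ y • P_y`. Replacing the `y`-th summand of a point of
this mixture by another point of `P_y` moves `f_φ` by `μ y` times the change on `P_y`; as
`f_φ` cannot move, it is constant on `P_y` whenever `μ y ≠ 0`.
-/

section Mix

variable {Θ ι : Type*} [Fintype ι]

theorem map_mix_point (f : (Θ → ℝ) →ₗ[ℝ] ℝ) (w : ι → ℝ) (q : ι → Θ → ℝ) :
    f (fun θ => ∑ i, w i * q i θ) = ∑ i, w i * f (q i) := by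
  have hq : (fun θ => ∑ i, w i * q i θ) = ∑ i, w i • q i := by
    ext θ
    simp
  simp [hq]

theorem sum_mul_update [DecidableEq ι] (w : ι → ℝ) (g : (Θ → ℝ) → ℝ) (q : ι → Θ → ℝ)
    (j : ι) (r : Θ → ℝ) :
    ∑ i, w i * g (Function.update q j r i) = ∑ i, w i * g (q i) + w j * (g r - g (q j)) := by
  have hupd : (fun i => w i * g (Function.update q j r i)) =
      Function.update (fun i => w i * g (q i)) j (w j * g r) := by
    ext i
    rcases eq_or_ne i j with rfl | hij
    · simp
    · simp [Function.update_of_ne hij]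
  rw [hupd, Finset.sum_update_of_mem (Finset.mem_univ j), ← Finset.add_sum_erase _ _
    (Finset.mem_univ j), Finset.sdiff_singleton_eq_erase]
  ring

variable [Fintype Θ]

theorem map_eq_of_mem_mix (f : (Θ → ℝ) →ₗ[ℝ] ℝ) (w : ι → ℝ) {P : ι → Set (Θ → ℝ)}
    {c : ι → ℝ} (hP : ∀ i, ∀ q ∈ P i, f q = c i) :
    ∀ p ∈ mix w P, f p = ∑ i, w i * c i := by
  rintro _ ⟨q, hq, rfl⟩
  rw [map_mix_point]
  exact Finset.sum_congr rfl fun i _ => by rw [hP i (q i) (hq i)]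

theorem update_mem_mix [DecidableEq ι] {w : ι → ℝ} {P : ι → Set (Θ → ℝ)} {q : ι → Θ → ℝ}
    (hq : ∀ i, q i ∈ P i) {j : ι} {r : Θ → ℝ} (hr : r ∈ P j) :
    (fun θ => ∑ i, w i * Function.update q j r i θ) ∈ mix w P := by
  refine ⟨Function.update q j r, fun i => ?_, rfl⟩
  rcases eq_or_ne i j with rfl | hij
  · simpa using hr
  · simpa [Function.update_of_ne hij] using hq i

theorem map_eq_map_of_forall_mem_mix_map_eq (f : (Θ → ℝ) →ₗ[ℝ] ℝ) {w : ι → ℝ}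
    {P : ι → Set (Θ → ℝ)} (hne : ∀ i, (P i).Nonempty) {c : ℝ}
    (hc : ∀ p ∈ mix w P, f p = c) {j : ι} (hj : w j ≠ 0) {p p' : Θ → ℝ}
    (hp : p ∈ P j) (hp' : p' ∈ P j) : f p = f p' := by
  classical
  choose q hq using hne
  have hshift : ∀ r ∈ P j, c = ∑ i, w i * f (q i) + w j * (f r - f (q j)) := fun r hr => by
    rw [← hc _ (update_mem_mix hq hr), map_mix_point, sum_mul_update]
  have hdiff : w j * (f p - f p') = 0 := by linarith [hshift p hp, hshift p' hp']
  exact sub_eq_zero.mp ((mul_eq_zero.mp hdiff).resolve_left hj)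

end Mix

section CellMass

variable {Θ Φ : Type*} [Fintype Θ] [DecidableEq Φ]

/-- The functional `f_φ` of the paper, for the cell `φ = cell ⁻¹' {i}`. -/
def cellMass (cell : Θ → Φ) (i : Φ) : (Θ → ℝ) →ₗ[ℝ] ℝ where
  toFun p := ∑ θ ∈ Finset.univ.filter (fun θ => cell θ = i), p θ
  map_add' p p' := Finset.sum_add_distrib
  map_smul' a p := by simp [Finset.mul_sum]

theorem cellMass_apply (cell : Θ → Φ) (i : Φ) (p : Θ → ℝ) :
    cellMass cell i p = ∑ θ ∈ Finset.univ.filter (fun θ => cell θ = i), p θ :=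
  rfl

theorem cellMass_eq_ite_of_supported (cell : Θ → Φ) {j : Φ} {q : Θ → ℝ} (hq : q ∈ simplex Θ)
    (hsupp : ∀ θ, cell θ ≠ j → q θ = 0) (i : Φ) :
    cellMass cell i q = if j = i then 1 else 0 := by
  rw [cellMass_apply]
  split_ifs with hji
  · subst hji
    rw [← hq.2]
    refine Finset.sum_subset (Finset.filter_subset _ _) fun θ _ hθ => hsupp θ ?_
    simpa using hθ
  · refine Finset.sum_eq_zero fun θ hθ => hsupp θ ?_
    rw [(Finset.mem_filter.mp hθ).2]
    exact Ne.symm hji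

theorem cellMass_eq_of_mem_mix [Fintype Φ] (cell : Θ → Φ) (τ : Φ → ℝ) {Pφ : Φ → Set (Θ → ℝ)}
    (hPφ : ∀ i, ∀ q ∈ Pφ i, q ∈ simplex Θ ∧ ∀ θ, cell θ ≠ i → q θ = 0) (i : Φ) :
    ∀ p ∈ mix τ Pφ, cellMass cell i p = τ i := by
  intro p hp
  rw [map_eq_of_mem_mix (cellMass cell i) τ
    (fun j q hq => cellMass_eq_ite_of_supported cell (hPφ j q hq).1 (hPφ j q hq).2 i) p hp]
  simp

end CellMass

theorem stmt18_general {Θ Φ Y : Type*} [Fintype Θ] [Fintype Φ] [Fintype Y] [DecidableEq Φ]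
    (cell : Θ → Φ)
    (τ : Φ → ℝ)
    (Pφ : Φ → Set (Θ → ℝ))
    (hPφ : ∀ i, ∀ q ∈ Pφ i, q ∈ simplex Θ ∧ ∀ θ, cell θ ≠ i → q θ = 0)
    (P₀ : Set (Θ → ℝ)) (hP₀ : P₀ = mix τ Pφ)
    (μ : Y → ℝ)
    (Py : Y → Set (Θ → ℝ))
    (hPy : ∀ y, (Py y).Nonempty ∧ IsCompact (Py y) ∧ Convex ℝ (Py y) ∧
      Py y ⊆ simplex Θ)
    (hAP : mix μ Py = P₀) :
    (∀ y, 0 < μ y → ∀ p ∈ Py y, ∀ p' ∈ Py y, ∀ i,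
        ∑ θ ∈ Finset.univ.filter (fun θ => cell θ = i), p θ =
        ∑ θ ∈ Finset.univ.filter (fun θ => cell θ = i), p' θ) ∧
    ∃ τy : Y → Φ → ℝ,
      (∀ y, 0 < μ y → ∀ p ∈ Py y, ∀ i,
        ∑ θ ∈ Finset.univ.filter (fun θ => cell θ = i), p θ = τy y i) ∧
      (∀ i, ∑ y, μ y * τy y i = τ i) := by
  have hne : ∀ y, (Py y).Nonempty := fun y => (hPy y).1
  have hmass : ∀ i, ∀ p ∈ mix μ Py, cellMass cell i p = τ i := fun i => by
    rw [hAP, hP₀]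
    exact cellMass_eq_of_mem_mix cell τ hPφ i
  have hconst : ∀ y, 0 < μ y → ∀ p ∈ Py y, ∀ p' ∈ Py y, ∀ i,
      cellMass cell i p = cellMass cell i p' := fun y hy p hp p' hp' i =>
    map_eq_map_of_forall_mem_mix_map_eq _ hne (hmass i) hy.ne' hp hp'
  choose q hq using hne
  refine ⟨hconst, fun y i => cellMass cell i (q y),
    fun y hy p hp i => hconst y hy p hp (q y) (hq y) i, fun i => ?_⟩
  rw [← map_mix_point, hmass i _ ⟨q, hq, rfl⟩]

/-- In an Aumann-plausible information structure over a partially identified prior set,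
the reduced-form weights of the posterior sets are deterministic: for each `y` with
`μ y > 0`, the functional `p ↦ ∑_{θ ∈ φ} p θ` is constant on `P_y`, with value `τ_y φ`
satisfying `∑ y, μ y * τ_y φ = τ φ`. -/
theorem stmt18 {Θ Φ Y : Type*} [Fintype Θ] [Fintype Φ] [Fintype Y] [DecidableEq Φ]
    (cell : Θ → Φ) (hcell : Function.Surjective cell)
    (τ : Φ → ℝ) (hτ0 : ∀ i, 0 < τ i) (hτ1 : ∑ i, τ i = 1)
    (Pφ : Φ → Set (Θ → ℝ))
    (hPφ : ∀ i, ∀ q ∈ Pφ i, q ∈ simplex Θ ∧ ∀ θ, cell θ ≠ i → q θ = 0)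
    (hdim : ∀ i, Module.finrank ℝ (vectorSpan ℝ (Pφ i)) =
      (Finset.univ.filter (fun θ => cell θ = i)).card - 1)
    (P₀ : Set (Θ → ℝ)) (hP₀ : P₀ = mix τ Pφ)
    (μ : Y → ℝ) (hμ0 : ∀ y, 0 ≤ μ y) (hμ1 : ∑ y, μ y = 1)
    (Py : Y → Set (Θ → ℝ))
    (hPy : ∀ y, (Py y).Nonempty ∧ IsCompact (Py y) ∧ Convex ℝ (Py y) ∧
      Py y ⊆ simplex Θ)
    (hAP : mix μ Py = P₀) :
    (∀ y, 0 < μ y → ∀ p ∈ Py y, ∀ p' ∈ Py y, ∀ i,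
        ∑ θ ∈ Finset.univ.filter (fun θ => cell θ = i), p θ =
        ∑ θ ∈ Finset.univ.filter (fun θ => cell θ = i), p' θ) ∧
    ∃ τy : Y → Φ → ℝ,
      (∀ y, 0 < μ y → ∀ p ∈ Py y, ∀ i,
        ∑ θ ∈ Finset.univ.filter (fun θ => cell θ = i), p θ = τy y i) ∧
      (∀ i, ∑ y, μ y * τy y i = τ i) :=
  stmt18_general cell τ Pφ hPφ P₀ hP₀ μ Py hPy hAP
end
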